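/- arXiv:1703.03010 — 5 statements merged into one kernel-verified Lean document; each statement's English description precedes it below -/
import Mathlib

section
/- Let G be a group generated by a finite set X, let H ≤ G, and let d be a left invariant metric on H. Suppose there exists an isometric action of G on a metric space S and a coarsely H-equivariant quasi-isometric embedding f : (H, d) → S. Then there exists a constant K such that d(1, h) ≤ K · |h|_X for all h ∈ H. -/
/-!
The orbit map `g ↦ g • f 1` of an isometric action moves each generator by a bounded amount, so
by the triangle inequality it is Lipschitz for the word length. Coarse equivariance keeps `f h`
within bounded distance of `h • f 1`, and the lower quasi-isometry bound turns the resulting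
estimate on `dist (f 1) (f h)` back into one on `d 1 h`; the additive constants are absorbed
because `|h|_X ≥ 1` for `h ≠ 1`.
-/

/-- The word length of `g` with respect to a generating set `X`. -/
noncomputable def wordLength {G : Type*} [Group G] (X : Finset G) (g : G) : ℕ :=
  sInf {n : ℕ | ∃ l : List G, (∀ x ∈ l, x ∈ X) ∧ l.prod = g ∧ l.length = n}

section WordLength

variable {G : Type*} [Group G] {X : Finset G} {g : G}

theorem exists_list_length_eq_wordLength
    (hg : ∃ l : List G, (∀ x ∈ l, x ∈ X) ∧ l.prod = g) :
    ∃ l : List G, (∀ x ∈ l, x ∈ X) ∧ l.prod = g ∧ l.length = wordLength X g := by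
  obtain ⟨l, hlX, hl⟩ := hg
  exact Nat.sInf_mem (s := {n | ∃ l : List G, (∀ x ∈ l, x ∈ X) ∧ l.prod = g ∧ l.length = n})
    ⟨l.length, l, hlX, hl, rfl⟩

theorem eq_one_of_wordLength_eq_zero
    (hg : ∃ l : List G, (∀ x ∈ l, x ∈ X) ∧ l.prod = g) (h0 : wordLength X g = 0) : g = 1 := by
  obtain ⟨l, -, rfl, hl⟩ := exists_list_length_eq_wordLength hg
  rw [List.length_eq_zero_iff.mp (hl.trans h0), List.prod_nil]

variable {S : Type*} [PseudoMetricSpace S] [MulAction G S] [IsIsometricSMul G S]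

theorem dist_list_prod_smul_le (s : S) {l : List G} (hlX : ∀ x ∈ l, x ∈ X) :
    dist s (l.prod • s) ≤ l.length * ∑ x ∈ X, dist s (x • s) := by
  induction l with
  | nil => simp
  | cons a l ih =>
    have ha : dist s (a • s) ≤ ∑ x ∈ X, dist s (x • s) :=
      Finset.single_le_sum (f := fun x => dist s (x • s)) (fun _ _ => dist_nonneg)
        (hlX a List.mem_cons_self)
    have hl := ih fun x hx => hlX x (List.mem_cons_of_mem a hx)
    calc dist s ((a :: l).prod • s)
        ≤ dist s (a • s) + dist (a • s) (a • l.prod • s) := by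
          rw [List.prod_cons, mul_smul]; exact dist_triangle _ _ _
      _ = dist s (a • s) + dist s (l.prod • s) := by rw [dist_smul]
      _ ≤ (a :: l).length * ∑ x ∈ X, dist s (x • s) := by
          rw [List.length_cons, Nat.cast_succ]; linarith

theorem dist_smul_le_wordLength_mul (s : S)
    (hg : ∃ l : List G, (∀ x ∈ l, x ∈ X) ∧ l.prod = g) :
    dist s (g • s) ≤ wordLength X g * ∑ x ∈ X, dist s (x • s) := by
  obtain ⟨l, hlX, rfl, hl⟩ := exists_list_length_eq_wordLength hg
  rw [← hl]
  exact dist_list_prod_smul_le s hlX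

end WordLength

theorem le_mul_add_mul_of_inv_mul_sub_le {C a b : ℝ} (hC : 0 < C) (h : 1 / C * a - C ≤ b) :
    a ≤ C * b + C * C := by
  rw [one_div, sub_le_iff_le_add, inv_mul_le_iff₀ hC] at h
  linarith

theorem dist_le_wordLength_of_extension_general {G : Type*} [Group G] (X : Finset G)
    (hgen : ∀ g : G, ∃ l : List G, (∀ x ∈ l, x ∈ X) ∧ l.prod = g)
    (H : Subgroup G) (d : H → H → ℝ)
    (hd_self : ∀ x : H, d x x = 0)
    {S : Type*} [MetricSpace S] [MulAction G S]
    (hisom : ∀ (g : G) (x y : S), dist (g • x) (g • y) = dist x y)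
    (f : H → S)
    (hqie : ∃ C : ℝ, 1 ≤ C ∧ ∀ x y : H,
      (1 / C) * d x y - C ≤ dist (f x) (f y) ∧ dist (f x) (f y) ≤ C * d x y + C)
    (hce : ∀ x : H, ∃ D : ℝ, ∀ h : H, dist (f (h * x)) ((h : G) • f x) ≤ D) :
    ∃ K : ℝ, ∀ h : H, d 1 h ≤ K * (wordLength X (h : G) : ℝ) := by
  have : IsIsometricSMul G S := ⟨fun g => Isometry.of_dist_eq (hisom g)⟩
  obtain ⟨C, hC1, hC⟩ := hqie
  obtain ⟨D, hD⟩ := hce 1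
  set M := ∑ x ∈ X, dist (f 1) (x • f 1)
  have hC0 : 0 < C := zero_lt_one.trans_le hC1
  have hD0 : 0 ≤ D := dist_nonneg.trans (hD 1)
  refine ⟨C * (M + D + C), fun h => ?_⟩
  rcases Nat.eq_zero_or_pos (wordLength X (h : G)) with h0 | hpos
  · obtain rfl : h = 1 := Subtype.ext (eq_one_of_wordLength_eq_zero (hgen h) h0)
    rw [hd_self, h0, Nat.cast_zero, mul_zero]
  set n : ℝ := (wordLength X (h : G) : ℝ)
  have hn : 1 ≤ n := Nat.one_le_cast.mpr hpos
  have horbit : dist (f 1) (f h) ≤ n * M + D := by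
    have hfh : dist (f h) ((h : G) • f 1) ≤ D := by simpa using hD h
    linarith [dist_triangle_right (f 1) (f h) ((h : G) • f 1),
      dist_smul_le_wordLength_mul (f 1) (hgen h)]
  calc d 1 h ≤ C * dist (f 1) (f h) + C * C :=
        le_mul_add_mul_of_inv_mul_sub_le hC0 (hC 1 h).1
    _ ≤ C * (n * M + D) + C * C := by gcongr
    _ ≤ C * (M + D + C) * n := by
        nlinarith [mul_nonneg (mul_nonneg hC0.le (add_nonneg hD0 hC0.le)) (sub_nonneg.mpr hn)]

/-- If `G` is generated by a finite set `X`, `H ≤ G` carries a left invariant metric `d`,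
and the left action of `H` on `(H, d)` extends to an isometric `G`-action (via a coarsely
`H`-equivariant quasi-isometric embedding `f`), then `d(1,h) ≤ K |h|_X` for some `K`. -/
theorem dist_le_wordLength_of_extension {G : Type*} [Group G] (X : Finset G)
    (hgen : ∀ g : G, ∃ l : List G, (∀ x ∈ l, x ∈ X) ∧ l.prod = g)
    (H : Subgroup G) (d : H → H → ℝ)
    (hd_self : ∀ x : H, d x x = 0)
    (hd_eq : ∀ x y : H, d x y = 0 → x = y)
    (hd_symm : ∀ x y : H, d x y = d y x)
    (hd_tri : ∀ x y z : H, d x z ≤ d x y + d y z)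
    (hd_inv : ∀ h x y : H, d (h * x) (h * y) = d x y)
    {S : Type*} [MetricSpace S] [MulAction G S]
    (hisom : ∀ (g : G) (x y : S), dist (g • x) (g • y) = dist x y)
    (f : H → S)
    (hqie : ∃ C : ℝ, 1 ≤ C ∧ ∀ x y : H,
      (1 / C) * d x y - C ≤ dist (f x) (f y) ∧ dist (f x) (f y) ≤ C * d x y + C)
    (hce : ∀ x : H, ∃ D : ℝ, ∀ h : H, dist (f (h * x)) ((h : G) • f x) ≤ D) :
    ∃ K : ℝ, ∀ h : H, d 1 h ≤ K * (wordLength X (h : G) : ℝ) :=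
  dist_le_wordLength_of_extension_general X hgen H d hd_self hisom f hqie hce
end

section
/- Let G be a finitely generated group and H ≤ G a subgroup such that every isometric action of H on a metric space extends to an isometric action of G (i.e., the extension problem for H ≤ G is solvable). Then H is finitely generated. -/
/-!
Suppose `H` is not finitely generated. Being a subgroup of the countable group `G`, it is the
union of an increasing chain `K 0 ≤ K 1 ≤ ⋯` of finitely generated, hence proper, subgroups.
Weighting each element by (a fast-growing function of) the first `K n` it lies in gives a
left-invariant ultrametric on `H` in which some `g n ∉ K n` is as far from `1` as we like compared
to its word length in `G`. On the other hand, if the action of `H` on itself by left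
multiplication extends, the quasi-isometric embedding `f` and the coarse equivariance bound
`dist 1 h` by an affine function of `dist (h • f 1) (f 1)`, which is at most linear in the
`G`-word length of `h`.
-/

section ChainLevel

variable {Γ : Type*} [Group Γ] {K : ℕ → Subgroup Γ} (hK : ∀ g, ∃ n, g ∈ K n)

open Classical in
noncomputable def chainLevel (g : Γ) : ℕ := Nat.find (hK g)

lemma chainLevel_le_iff (hmono : Monotone K) {g : Γ} {n : ℕ} :
    chainLevel hK g ≤ n ↔ g ∈ K n := by
  classical
  simp only [chainLevel, Nat.find_le_iff]
  exact ⟨fun ⟨m, hm, hg⟩ => hmono hm hg, fun hg => ⟨n, le_rfl, hg⟩⟩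

lemma mem_chainLevel (hmono : Monotone K) (g : Γ) : g ∈ K (chainLevel hK g) :=
  (chainLevel_le_iff hK hmono).1 le_rfl

lemma chainLevel_mul_le (hmono : Monotone K) (a b : Γ) :
    chainLevel hK (a * b) ≤ max (chainLevel hK a) (chainLevel hK b) :=
  (chainLevel_le_iff hK hmono).2 <|
    mul_mem (hmono (le_max_left _ _) (mem_chainLevel hK hmono a))
      (hmono (le_max_right _ _) (mem_chainLevel hK hmono b))

lemma chainLevel_inv (hmono : Monotone K) (g : Γ) : chainLevel hK g⁻¹ = chainLevel hK g :=
  le_antisymm ((chainLevel_le_iff hK hmono).2 (inv_mem (mem_chainLevel hK hmono g)))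
    ((chainLevel_le_iff hK hmono).2 (inv_mem_iff.1 (mem_chainLevel hK hmono g⁻¹)))

noncomputable def chainLevelNorm (hmono : Monotone K) (hK0 : K 0 = ⊥) (ψ : ℕ → ℕ)
    (hψ : Monotone ψ) (hψ0 : ∀ n, ψ n = 0 ↔ n = 0) : GroupNorm Γ where
  toFun g := ψ (chainLevel hK g)
  map_one' := by
    have : chainLevel hK (1 : Γ) = 0 :=
      Nat.le_zero.1 ((chainLevel_le_iff hK hmono).2 (one_mem _))
    simp [this, hψ0]
  mul_le' a b := by
    have := hψ (chainLevel_mul_le hK hmono a b)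
    rw [hψ.map_max] at this
    exact_mod_cast this.trans (max_le_add_of_nonneg (Nat.zero_le _) (Nat.zero_le _))
  inv' g := by simp only [chainLevel_inv hK hmono]
  eq_one_of_map_eq_zero' g hg := by
    have : chainLevel hK g = 0 := (hψ0 _).1 (by exact_mod_cast hg)
    simpa [hK0] using (chainLevel_le_iff hK hmono).1 this.le

lemma chainLevelNorm_apply (hmono : Monotone K) (hK0 : K 0 = ⊥) (ψ : ℕ → ℕ) (hψ : Monotone ψ)
    (hψ0 : ∀ n, ψ n = 0 ↔ n = 0) (g : Γ) :
    chainLevelNorm hK hmono hK0 ψ hψ hψ0 g = ψ (chainLevel hK g) := rfl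

end ChainLevel

lemma exists_exhausting_chain_of_not_fg {Γ : Type*} [Group Γ] [Countable Γ]
    (hΓ : ¬ Group.FG Γ) :
    ∃ K : ℕ → Subgroup Γ, Monotone K ∧ K 0 = ⊥ ∧ (∀ g, ∃ n, g ∈ K n) ∧ ∀ n, K n ≠ ⊤ := by
  classical
  obtain ⟨e, he⟩ := exists_surjective_nat Γ
  refine ⟨fun n => Subgroup.closure ((Finset.range n).image e), fun m n hmn => ?_, by simp,
    fun g => ?_, fun n htop => hΓ (Group.fg_def.2 (htop ▸ ⟨_, rfl⟩))⟩
  · exact Subgroup.closure_mono (by gcongr)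
  · obtain ⟨n, rfl⟩ := he g
    exact ⟨n + 1, Subgroup.subset_closure
      (Finset.mem_coe.2 (Finset.mem_image_of_mem e (Finset.self_mem_range_succ n)))⟩

theorem exists_groupNorm_forall_exists_lt_of_not_fg {Γ : Type*} [Group Γ] [Countable Γ]
    (hΓ : ¬ Group.FG Γ) (L : Γ → ℕ) :
    ∃ N : GroupNorm Γ, ∀ a b : ℝ, ∃ g, a * L g + b < N g := by
  obtain ⟨K, hmono, hK0, hK, hne⟩ := exists_exhausting_chain_of_not_fg hΓ
  choose g hg using fun n => SetLike.exists_not_mem_of_ne_top (K n) (hne n)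
  -- `g n` has level `> n`, so the `n`-th summand forces its norm above `(n + 1) * (L (g n) + 1)`.
  set ψ : ℕ → ℕ := fun m => ∑ j ∈ Finset.range m, (j + 1) * (L (g j) + 1)
  have hψ : Monotone ψ := fun m n hmn =>
    Finset.sum_le_sum_of_subset (Finset.range_subset_range.2 hmn)
  have hψ0 (n : ℕ) : ψ n = 0 ↔ n = 0 := by
    cases n <;> simp [ψ, Finset.sum_range_succ]
  refine ⟨chainLevelNorm hK hmono hK0 ψ hψ hψ0, fun a b => ?_⟩
  obtain ⟨n, hn⟩ := exists_nat_gt (max a b)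
  have hlevel : n < chainLevel hK (g n) :=
    lt_of_not_ge fun h => hg n ((chainLevel_le_iff hK hmono).1 h)
  have hgn : (n + 1) * (L (g n) + 1) ≤ ψ (chainLevel hK (g n)) :=
    Finset.single_le_sum (f := fun j => (j + 1) * (L (g j) + 1)) (fun _ _ => Nat.zero_le _)
      (Finset.mem_range.2 hlevel)
  refine ⟨g n, ?_⟩
  rw [chainLevelNorm_apply]
  have hgn' : ((n : ℝ) + 1) * (L (g n) + 1) ≤ ψ (chainLevel hK (g n)) := by exact_mod_cast hgn
  have ha : a * L (g n) ≤ n * L (g n) := by gcongr; exact (le_max_left a b).trans hn.le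
  have hb : b < n := (le_max_right a b).trans_lt hn
  linarith

lemma dist_list_prod_smul_le_s6 {G S : Type*} [Monoid G] [PseudoMetricSpace S] [MulAction G S]
    [IsIsometricSMul G S] (p : S) {M : ℝ} :
    ∀ l : List G, (∀ g ∈ l, dist (g • p) p ≤ M) → dist (l.prod • p) p ≤ M * l.length
  | [], _ => by simp
  | g :: l, hl => by
    have ih := dist_list_prod_smul_le_s6 p l fun x hx => hl x (List.mem_cons_of_mem g hx)
    calc dist ((g :: l).prod • p) p ≤ dist (g • l.prod • p) (g • p) + dist (g • p) p := by
          rw [List.prod_cons, mul_smul]; exact dist_triangle _ _ _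
      _ ≤ M * l.length + M := by
          rw [dist_smul]; exact add_le_add ih (hl g List.mem_cons_self)
      _ = M * (g :: l).length := by simp; ring

theorem Group.FG.exists_dist_smul_le (G : Type*) [Group G] [Group.FG G] :
    ∃ L : G → ℕ, ∀ (S : Type*) [PseudoMetricSpace S] [MulAction G S] [IsIsometricSMul G S]
      (p : S), ∃ M : ℝ, ∀ g : G, dist (g • p) p ≤ M * L g := by
  obtain ⟨T, hT, hTfin⟩ := Group.fg_iff.1 ‹Group.FG G›
  have hword (g : G) : ∃ l : List G, (∀ x ∈ l, x ∈ T ∪ T⁻¹) ∧ l.prod = g := by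
    apply Submonoid.exists_list_of_mem_closure
    rw [← Subgroup.closure_toSubmonoid, hT]
    trivial
  choose word hword_mem hword_prod using hword
  refine ⟨fun g => (word g).length, fun S _ _ _ p => ?_⟩
  obtain ⟨M, hM⟩ := ((hTfin.union hTfin.inv).image fun t => dist (t • p) p).bddAbove
  refine ⟨M, fun g => ?_⟩
  simpa only [hword_prod] using dist_list_prod_smul_le_s6 p (word g)
    fun x hx => hM (Set.mem_image_of_mem _ (hword_mem g x hx))

/-- If `G` is a finitely generated group and `H ≤ G` is a subgroup for which the extension
problem is solvable (every isometric action of `H` on a metric space admits an extension to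
an isometric `G`-action), then `H` is finitely generated. -/
theorem fg_of_extension_problem_solvable {G : Type} [Group G] [Group.FG G] (H : Subgroup G)
    (hext : ∀ (R : Type) [MetricSpace R] (ρ : H → R → R),
      (∀ x, ρ 1 x = x) → (∀ h h' x, ρ (h * h') x = ρ h (ρ h' x)) →
      (∀ h x y, dist (ρ h x) (ρ h y) = dist x y) →
      ∃ (S : Type) (_ : MetricSpace S) (σ : G → S → S),
        (∀ x, σ 1 x = x) ∧ (∀ g g' x, σ (g * g') x = σ g (σ g' x)) ∧
        (∀ g x y, dist (σ g x) (σ g y) = dist x y) ∧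
        ∃ f : R → S,
          (∃ C : ℝ, 1 ≤ C ∧ ∀ x y : R,
            (1 / C) * dist x y - C ≤ dist (f x) (f y) ∧ dist (f x) (f y) ≤ C * dist x y + C) ∧
          (∀ x : R, ∃ D : ℝ, ∀ h : H, dist (f (ρ h x)) (σ (h : G) (f x)) ≤ D)) :
    H.FG := by
  by_contra hH
  have : Countable G := by
    obtain ⟨α, _, φ, hφ⟩ := Group.fg_iff_exists_freeGroup_hom_surjective_finite.1 ‹Group.FG G›
    exact hφ.countable
  obtain ⟨L, hL⟩ := Group.FG.exists_dist_smul_le G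
  obtain ⟨N, hN⟩ := exists_groupNorm_forall_exists_lt_of_not_fg
    (mt (Group.fg_iff_subgroup_fg H).1 hH) fun h : H => L h
  let := N.toNormedGroup
  obtain ⟨S, _, σ, hσ1, hσmul, hσiso, f, ⟨C, hC, hf⟩, hfσ⟩ :=
    hext H (· * ·) one_mul mul_assoc dist_mul_left
  let : MulAction G S := { smul := σ, one_smul := hσ1, mul_smul := hσmul }
  have : IsIsometricSMul G S := ⟨fun g => Isometry.of_dist_eq (hσiso g)⟩
  obtain ⟨M, hM⟩ := hL S (f 1)
  obtain ⟨D, hD⟩ := hfσ 1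
  obtain ⟨h, hh⟩ := hN (C * M) (C * (D + C))
  have hfar : dist (f 1) (f h) ≤ M * L h + D := by
    calc dist (f 1) (f h) ≤ dist (f 1) ((h : G) • f 1) + dist ((h : G) • f 1) (f h) :=
          dist_triangle _ _ _
      _ = dist ((h : G) • f 1) (f 1) + dist (f (h * 1)) ((h : G) • f 1) := by
          rw [mul_one, dist_comm (f 1), dist_comm _ (f h)]
      _ ≤ M * L h + D := add_le_add (hM h) (hD h)
  have hC0 : 0 < C := zero_lt_one.trans_le hC
  have hnear : ‖h‖ ≤ C * (dist (f 1) (f h) + C) := by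
    have := (hf 1 h).1
    rw [dist_one_left, one_div, inv_mul_eq_div, sub_le_iff_le_add, div_le_iff₀ hC0] at this
    linarith
  refine hh.not_ge ?_
  calc N h = ‖h‖ := rfl
    _ ≤ C * (M * L h + D + C) := hnear.trans (by gcongr)
    _ = C * M * L h + C * (D + C) := by ring
end

section
/- Every isometric action of a group G on a geodesic metric space S is equivalent to an action of G on a connected graph Γ (with the combinatorial path metric) such that G acts freely on the vertex set of Γ. Concretely, let Γ have vertex set G × S with an edge between (g₁,s₁) and (g₂,s₂) whenever d_S(s₁,s₂) ≤ 1; then the diagonal-type G-action on Γ is free on vertices and the map s ↦ (1,s) is a coarsely G-equivariant quasi-isometry S → Γ. -/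
/-!
Take the Rips graph of `S` at scale `1` and replace every point by a copy of `G`: the vertices
are `G × S`, and two vertices are adjacent when their `S`-coordinates are at distance at most `1`.
The left translation on the `G`-coordinate makes the diagonal action free, and all vertices over
one point of `S` are pairwise adjacent, so the graph sees only the `S`-coordinate up to an
additive error `1`. Each edge moves the `S`-coordinate by at most `1`, and in a geodesic space
two points at distance `d` are joined by a chain of `⌊d⌋₊ + 1` steps of length at most `1`;
hence `s ↦ (1, s)` is a `(1, 1)`-quasi-isometry.
-/

open SimpleGraph

def IsGeodesicSpace (S : Type*) [PseudoMetricSpace S] : Prop :=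
  ∀ x y : S, ∃ γ : ℝ → S, γ 0 = x ∧ γ (dist x y) = y ∧
    ∀ s t : ℝ, s ∈ Set.Icc 0 (dist x y) → t ∈ Set.Icc 0 (dist x y) → dist (γ s) (γ t) = |s - t|

theorem IsGeodesicSpace.exists_dist_le_and_dist_le {S : Type*} [PseudoMetricSpace S]
    (hS : IsGeodesicSpace S) {x y : S} {a b : ℝ} (ha : 0 ≤ a) (hb : 0 ≤ b)
    (hxy : dist x y ≤ a + b) : ∃ z, dist x z ≤ a ∧ dist z y ≤ b := by
  obtain ⟨γ, hγ₀, hγ₁, hγ⟩ := hS x y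
  set t := min a (dist x y)
  have h₀ : (0 : ℝ) ∈ Set.Icc 0 (dist x y) := ⟨le_rfl, dist_nonneg⟩
  have h₁ : dist x y ∈ Set.Icc 0 (dist x y) := ⟨dist_nonneg, le_rfl⟩
  have ht : t ∈ Set.Icc 0 (dist x y) := ⟨le_min ha dist_nonneg, min_le_right _ _⟩
  refine ⟨γ t, ?_, ?_⟩
  · calc dist x (γ t) = |0 - t| := by simpa only [hγ₀] using hγ 0 t h₀ ht
      _ ≤ a := by rw [zero_sub, abs_neg, abs_of_nonneg ht.1]; exact min_le_left _ _
  · calc dist (γ t) y = |t - dist x y| := by simpa only [hγ₁] using hγ t _ ht h₁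
      _ = dist x y - t := by rw [abs_sub_comm, abs_of_nonneg (sub_nonneg.2 ht.2)]
      _ ≤ b := by rcases min_choice a (dist x y) with h | h <;> simp only [t, h] <;> linarith

def unitDistGraph (ι S : Type*) [PseudoMetricSpace S] : SimpleGraph (ι × S) where
  Adj u v := u ≠ v ∧ dist u.2 v.2 ≤ 1
  symm := ⟨fun _ _ h => ⟨h.1.symm, (dist_comm _ _).trans_le h.2⟩⟩
  loopless := ⟨fun _ h => h.1 rfl⟩

namespace unitDistGraph

variable {ι S : Type*} [PseudoMetricSpace S] {u v : ι × S}

theorem adj_iff : (unitDistGraph ι S).Adj u v ↔ u ≠ v ∧ dist u.2 v.2 ≤ 1 := Iff.rfl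

theorem adj_smul_iff {G : Type*} [Group G] [MulAction G ι] [MulAction G S] [IsIsometricSMul G S]
    (g : G) : (unitDistGraph ι S).Adj (g • u) (g • v) ↔ (unitDistGraph ι S).Adj u v := by
  simp only [adj_iff, ne_eq, smul_left_cancel_iff, Prod.smul_snd, dist_smul]

theorem exists_walk_length_le_one (h : dist u.2 v.2 ≤ 1) :
    ∃ p : (unitDistGraph ι S).Walk u v, p.length ≤ 1 := by
  by_cases huv : u = v
  · subst huv
    exact ⟨.nil, zero_le_one⟩
  · exact ⟨(show (unitDistGraph ι S).Adj u v from ⟨huv, h⟩).toWalk, le_rfl⟩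

theorem dist_le_one (h : dist u.2 v.2 ≤ 1) : (unitDistGraph ι S).dist u v ≤ 1 :=
  let ⟨p, hp⟩ := exists_walk_length_le_one h
  (dist_le p).trans hp

theorem dist_snd_le_length (p : (unitDistGraph ι S).Walk u v) : dist u.2 v.2 ≤ p.length := by
  induction p with
  | nil => simp
  | @cons a b c h p ih =>
    rw [Walk.length_cons, Nat.cast_succ]
    linarith [dist_triangle a.2 b.2 c.2, h.2]

theorem dist_snd_le_dist (h : (unitDistGraph ι S).Reachable u v) :
    dist u.2 v.2 ≤ (unitDistGraph ι S).dist u v := by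
  obtain ⟨p, hp⟩ := h.exists_walk_length_eq_dist
  exact hp ▸ dist_snd_le_length p

section Geodesic

variable (hS : IsGeodesicSpace S)
include hS

theorem exists_walk_length_le_succ (i : ι) (n : ℕ) {x y : S} (hxy : dist x y ≤ n + 1) :
    ∃ p : (unitDistGraph ι S).Walk (i, x) (i, y), p.length ≤ n + 1 := by
  induction n generalizing y with
  | zero => exact exists_walk_length_le_one (by simpa using hxy)
  | succ n ih =>
    obtain ⟨z, hxz, hzy⟩ := hS.exists_dist_le_and_dist_le (a := n + 1) (by positivity) zero_le_one
      (by push_cast at hxy; linarith)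
    obtain ⟨p, hp⟩ := ih hxz
    obtain ⟨q, hq⟩ := exists_walk_length_le_one (u := (i, z)) (v := (i, y)) hzy
    exact ⟨p.append q, by rw [Walk.length_append]; omega⟩

theorem dist_le_dist_snd_add_one (i : ι) (x y : S) :
    ((unitDistGraph ι S).dist (i, x) (i, y) : ℝ) ≤ dist x y + 1 := by
  obtain ⟨p, hp⟩ := exists_walk_length_le_succ hS i ⌊dist x y⌋₊ (Nat.lt_floor_add_one _).le
  have hfloor : (⌊dist x y⌋₊ : ℝ) ≤ dist x y := Nat.floor_le dist_nonneg
  have hdist : (unitDistGraph ι S).dist (i, x) (i, y) ≤ ⌊dist x y⌋₊ + 1 := (dist_le p).trans hp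
  calc ((unitDistGraph ι S).dist (i, x) (i, y) : ℝ) ≤ ⌊dist x y⌋₊ + 1 := by exact_mod_cast hdist
    _ ≤ dist x y + 1 := by linarith

theorem connected [Nonempty ι] [Nonempty S] : (unitDistGraph ι S).Connected := by
  rw [connected_iff]
  refine ⟨?_, inferInstance⟩
  rintro ⟨i, x⟩ ⟨j, y⟩
  obtain ⟨p, -⟩ := exists_walk_length_le_one (u := (i, x)) (v := (j, x)) (by simp)
  obtain ⟨q, -⟩ := exists_walk_length_le_succ hS j ⌊dist x y⌋₊ (Nat.lt_floor_add_one _).le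
  exact ⟨p.append q⟩

end Geodesic

end unitDistGraph

/-- Every isometric action of a group `G` on a nonempty geodesic metric space `S` is
equivalent to an action of `G` on a connected graph (with the combinatorial metric) by
graph automorphisms that is free on the vertex set: there is a coarsely `G`-equivariant
quasi-isometry from `S` to the vertex set with the graph metric. -/
theorem action_equivalent_to_free_graph_action {G : Type} [Group G] {S : Type}
    [MetricSpace S] [Nonempty S] [MulAction G S]
    (hisom : ∀ (g : G) (x y : S), dist (g • x) (g • y) = dist x y)
    (hgeo : ∀ x y : S, ∃ γ : ℝ → S, γ 0 = x ∧ γ (dist x y) = y ∧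
      ∀ s t : ℝ, s ∈ Set.Icc 0 (dist x y) → t ∈ Set.Icc 0 (dist x y) →
        dist (γ s) (γ t) = |s - t|) :
    ∃ (V : Type) (Γ : SimpleGraph V) (σ : G → V → V),
      Γ.Connected ∧
      (∀ v, σ 1 v = v) ∧ (∀ g g' v, σ (g * g') v = σ g (σ g' v)) ∧
      (∀ (g : G) (u v : V), Γ.Adj u v ↔ Γ.Adj (σ g u) (σ g v)) ∧
      (∀ (g : G) (v : V), σ g v = v → g = 1) ∧
      ∃ f : S → V,
        (∀ x : S, ∃ D : ℝ, ∀ g : G, (Γ.dist (f (g • x)) (σ g (f x)) : ℝ) ≤ D) ∧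
        (∃ C : ℝ, 1 ≤ C ∧ ∀ x y : S,
          (1 / C) * dist x y - C ≤ (Γ.dist (f x) (f y) : ℝ) ∧
          (Γ.dist (f x) (f y) : ℝ) ≤ C * dist x y + C) ∧
        (∃ ε : ℝ, ∀ v : V, ∃ x : S, (Γ.dist (f x) v : ℝ) ≤ ε) := by
  have : IsIsometricSMul G S := ⟨fun g => Isometry.of_dist_eq (hisom g)⟩
  have hconn : (unitDistGraph G S).Connected := unitDistGraph.connected hgeo
  refine ⟨G × S, unitDistGraph G S, (· • ·), hconn, one_smul G, mul_smul,
    fun g _ _ => (unitDistGraph.adj_smul_iff g).symm,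
    fun _ v hv => mul_eq_right.mp (congrArg Prod.fst hv),
    fun s => (1, s), fun x => ⟨1, fun g => ?_⟩, ⟨1, le_rfl, fun x y => ⟨?_, ?_⟩⟩,
    ⟨1, fun v => ⟨v.2, ?_⟩⟩⟩
  · exact_mod_cast unitDistGraph.dist_le_one (by simp)
  · linarith [unitDistGraph.dist_snd_le_dist (hconn.preconnected (1, x) (1, y))]
  · linarith [unitDistGraph.dist_le_dist_snd_add_one hgeo (1 : G) x y]
  · exact_mod_cast unitDistGraph.dist_le_one (by simp)
end

section
/- Let G be a group generated by elements a and b subject to t² = 1 and t⁻¹at = b, i.e. G = F(a,b) ⋊ ℤ/2ℤ where the involution t swaps the free generators a and b, and let H = ⟨a, b⟩ be the free group of rank 2 inside G. Then the action of H on ℝ in which a acts by translation x ↦ x + 1 and b acts trivially admits no extension to an isometric action of G on any metric space: in any isometric G-action, the orbits of ⟨a⟩ are bounded if and only if the orbits of ⟨b⟩ are bounded, since a and b are conjugate in G. -/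
/-!
Since `u⁻¹ a u = b`, the elements `a` and `b` are conjugate in `G`, so in an isometric
`G`-action the `⟨a⟩`-orbits are bounded exactly when the `⟨b⟩`-orbits are. In an extension,
`b` acts trivially on `ℝ`, so coarse equivariance keeps the `⟨b⟩`-orbit of `f 0` near `f 0`;
hence the `⟨a⟩`-orbit of `f 0` is bounded too. But coarse equivariance also keeps `a ^ n • f 0`
near `f n`, and `n ↦ f n` is unbounded because `f` is a quasi-isometric embedding.
-/
open Bornology Metric Set

theorem isBounded_range_of_dist_le {ι α : Type*} [PseudoMetricSpace α] {f g : ι → α} {D : ℝ}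
    (hg : IsBounded (range g)) (h : ∀ i, dist (f i) (g i) ≤ D) : IsBounded (range f) :=
  hg.cthickening.subset <| range_subset_iff.2 fun i =>
    mem_cthickening_of_dist_le _ _ D _ (mem_range_self i) (h i)

theorem not_isBounded_range_natCast_of_le_dist {α : Type*} [PseudoMetricSpace α] {f : ℝ → α}
    {K C : ℝ} (hK : 0 < K) (h : ∀ x y, K * dist x y - C ≤ dist (f x) (f y)) :
    ¬ IsBounded (range fun n : ℕ => f n) := by
  rw [isBounded_range_iff]
  rintro ⟨R, hR⟩
  obtain ⟨n, hn⟩ := exists_nat_gt ((R + C) / K)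
  have hlow : K * n - C ≤ R := by
    simpa [Real.dist_eq] using (h n (0 : ℕ)).trans (hR n 0)
  rw [div_lt_iff₀ hK] at hn
  linarith

section IsometricAction

variable {G S : Type*} [Group G] [PseudoMetricSpace S] [MulAction G S] [IsIsometricSMul G S]

theorem isBounded_range_pow_smul_of_isBounded {g : G} {x : S}
    (hx : IsBounded (range fun n : ℕ => g ^ n • x)) (y : S) :
    IsBounded (range fun n : ℕ => g ^ n • y) :=
  isBounded_range_of_dist_le hx fun _ => (dist_smul _ y x).le

theorem isBounded_range_conj_pow_smul {g : G} {x : S}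
    (hx : IsBounded (range fun n : ℕ => g ^ n • x)) (h : G) :
    IsBounded (range fun n : ℕ => (h * g * h⁻¹) ^ n • x) := by
  obtain ⟨R, hR⟩ := isBounded_range_iff.1 (isBounded_range_pow_smul_of_isBounded hx (h⁻¹ • x))
  refine isBounded_range_iff.2 ⟨R, fun m n => ?_⟩
  simpa only [conj_pow, mul_smul, smul_inv_smul, dist_smul] using hR m n

end IsometricAction

theorem no_extension_of_translation_action_general {G : Type} [Group G] (a b u : G)
    (hconj : u⁻¹ * a * u = b)
    (ψ : (Subgroup.closure ({a, b} : Set G)) →* Multiplicative ℝ)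
    (hψa : ψ ⟨a, Subgroup.subset_closure (Set.mem_insert a {b})⟩ = Multiplicative.ofAdd 1)
    (hψb : ψ ⟨b, Subgroup.subset_closure (Set.mem_insert_of_mem a rfl)⟩ =
      Multiplicative.ofAdd 0) :
    ¬ ∃ (S : Type) (_ : MetricSpace S) (σ : G → S → S),
        (∀ x, σ 1 x = x) ∧ (∀ g g' x, σ (g * g') x = σ g (σ g' x)) ∧
        (∀ g x y, dist (σ g x) (σ g y) = dist x y) ∧
        ∃ f : ℝ → S,
          (∃ C : ℝ, 1 ≤ C ∧ ∀ x y : ℝ,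
            (1 / C) * dist x y - C ≤ dist (f x) (f y) ∧
            dist (f x) (f y) ≤ C * dist x y + C) ∧
          (∀ x : ℝ, ∃ D : ℝ, ∀ h : (Subgroup.closure ({a, b} : Set G)),
            dist (f (Multiplicative.toAdd (ψ h) + x)) (σ (h : G) (f x)) ≤ D) := by
  rintro ⟨S, _, σ, hσ1, hσm, hσiso, f, ⟨C, hC1, hQI⟩, hcoarse⟩
  -- `g • x` unfolds to `σ g x`, which is what lets `hD` be read as a statement about `•`.
  let _ : MulAction G S := { smul := σ, one_smul := hσ1, mul_smul := hσm }
  have : IsIsometricSMul G S := ⟨fun g => Isometry.of_dist_eq (hσiso g)⟩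
  obtain ⟨D, hD⟩ := hcoarse 0
  have hD_pow (h : Subgroup.closure ({a, b} : Set G)) (n : ℕ) :
      dist (f (n • Multiplicative.toAdd (ψ h))) ((h : G) ^ n • f 0) ≤ D := by
    have := hD (h ^ n)
    simp only [map_pow, toAdd_pow, add_zero, Subgroup.coe_pow] at this
    exact this
  have hb_orbit : IsBounded (range fun n : ℕ => b ^ n • f 0) := by
    refine isBounded_range_of_dist_le (g := fun _ => f 0) (D := D)
      (isBounded_singleton.subset range_const_subset) fun n => ?_
    simpa [hψb, dist_comm] using hD_pow ⟨b, Subgroup.subset_closure (by simp)⟩ n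
  have ha_orbit : IsBounded (range fun n : ℕ => a ^ n • f 0) := by
    have : a = u * b * u⁻¹ := by rw [← hconj]; group
    exact this ▸ isBounded_range_conj_pow_smul hb_orbit u
  refine not_isBounded_range_natCast_of_le_dist (one_div_pos.2 (by linarith))
    (fun x y => (hQI x y).1) (isBounded_range_of_dist_le (D := D) ha_orbit fun n => ?_)
  simpa [hψa] using hD_pow ⟨a, Subgroup.subset_closure (by simp)⟩ n

/-- Let `G` be a group with elements `a, b, u` satisfying `u² = 1` and `u⁻¹ a u = b`
(as in `G = F(a,b) ⋊ ℤ/2ℤ` with `u` swapping the free generators), let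
`H = ⟨a, b⟩ ≤ G`, and let `H` act on `ℝ` by translations via a homomorphism `ψ` with
`ψ(a) = 1` and `ψ(b) = 0` (so `a` translates by `1` and `b` acts trivially). Then this
action of `H` on `ℝ` admits no extension to an isometric action of `G` on any metric
space: there is no isometric `G`-action together with a coarsely `H`-equivariant
quasi-isometric embedding `ℝ → S`. -/
theorem no_extension_of_translation_action {G : Type} [Group G] (a b u : G)
    (hu2 : u * u = 1) (hconj : u⁻¹ * a * u = b)
    (ψ : (Subgroup.closure ({a, b} : Set G)) →* Multiplicative ℝ)
    (hψa : ψ ⟨a, Subgroup.subset_closure (Set.mem_insert a {b})⟩ = Multiplicative.ofAdd 1)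
    (hψb : ψ ⟨b, Subgroup.subset_closure (Set.mem_insert_of_mem a rfl)⟩ =
      Multiplicative.ofAdd 0) :
    ¬ ∃ (S : Type) (_ : MetricSpace S) (σ : G → S → S),
        (∀ x, σ 1 x = x) ∧ (∀ g g' x, σ (g * g') x = σ g (σ g' x)) ∧
        (∀ g x y, dist (σ g x) (σ g y) = dist x y) ∧
        ∃ f : ℝ → S,
          (∃ C : ℝ, 1 ≤ C ∧ ∀ x y : ℝ,
            (1 / C) * dist x y - C ≤ dist (f x) (f y) ∧
            dist (f x) (f y) ≤ C * dist x y + C) ∧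
          (∀ x : ℝ, ∃ D : ℝ, ∀ h : (Subgroup.closure ({a, b} : Set G)),
            dist (f (Multiplicative.toAdd (ψ h) + x)) (σ (h : G) (f x)) ≤ D) :=
  no_extension_of_translation_action_general a b u hconj ψ hψa hψb
end

section
/- Let G be a finitely generated group with finite generating set X, let A be a finite-index abelian normal subgroup such that every g ∈ G and a ∈ A satisfy ga = a^{ε(g)} g with ε(g) ∈ {+1, −1} depending only on g, and let H ≤ A be a subgroup with finite generating set Y. Suppose every subgroup of G is undistorted, so there is D with |h|_Y ≤ D|h|_X for all h ∈ H. Then for every left-invariant ℕ-valued metric d_H on H, there is a constant L such that d_H(1, g) ≤ L · d_{C,X}(1, g) for all g ∈ H, where d_{C,X} is the metric on G induced by d_H and X; i.e., H is incompressible in G. -/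
-- The weight function on `G` induced by a generating set `X` and a left-invariant
-- `ℕ`-valued metric `d` on a subgroup `H`: `w(1) = 0`, `w(x) = 1` for `x ∈ X`,
-- `w(h) = d(1,h)` for `h ∈ H`, and `∞` otherwise.
open Classical in
noncomputable def inducedWeight {G : Type*} [Group G] (X : Finset G) (H : Subgroup G)
    (d : H → H → ℕ) (g : G) : ℕ∞ :=
  if g = 1 then 0 else if g ∈ X then 1 else if hg : g ∈ H then (d 1 ⟨g, hg⟩ : ℕ∞) else ⊤

/-- The induced metric `d_{C,X}` on `G`. -/
noncomputable def inducedDist {G : Type*} [Group G] (X : Finset G) (H : Subgroup G)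
    (d : H → H → ℕ) (f g : G) : ℕ∞ :=
  sInf {n : ℕ∞ | ∃ l : List G, l.prod = f⁻¹ * g ∧ (l.map (inducedWeight X H d)).sum = n}

/-- Let `G` be generated by a finite set `X`, let `A` be a finite-index abelian normal
subgroup such that `g a = a^{ε(g)} g` with `ε(g) ∈ {±1}` depending only on `g`, and let
`H ≤ A` have finite generating set `Y` and be undistorted (`|h|_Y ≤ D |h|_X`). Then for
every left invariant `ℕ`-valued metric `d` on `H` there is `L` with
`d(1,g) ≤ L ⬝ d_{C,X}(1,g)` for all `g ∈ H`; i.e. `H` is incompressible in `G`. -/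
theorem abelian_subgroup_incompressible {G : Type*} [Group G] (X : Finset G)
    (hXgen : ∀ g : G, ∃ l : List G, (∀ x ∈ l, x ∈ X) ∧ l.prod = g)
    (A : Subgroup G) [A.Normal] [A.FiniteIndex]
    (habel : ∀ a ∈ A, ∀ b ∈ A, a * b = b * a)
    (ε : G → ℤ) (hε : ∀ g : G, ε g = 1 ∨ ε g = -1)
    (hcomm : ∀ g : G, ∀ a ∈ A, g * a = a ^ (ε g) * g)
    (H : Subgroup G) (hHA : H ≤ A)
    (Y : Finset G) (hYH : ∀ y ∈ Y, y ∈ H)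
    (hYgen : ∀ h ∈ H, ∃ l : List G, (∀ x ∈ l, x ∈ Y) ∧ l.prod = h)
    (D : ℕ) (hD : ∀ h ∈ H, wordLength Y h ≤ D * wordLength X h)
    (d : H → H → ℕ)
    (hd_self : ∀ x : H, d x x = 0)
    (hd_eq : ∀ x y : H, d x y = 0 → x = y)
    (hd_symm : ∀ x y : H, d x y = d y x)
    (hd_tri : ∀ x y z : H, d x z ≤ d x y + d y z)
    (hd_inv : ∀ h x y : H, d (h * x) (h * y) = d x y) :
    ∃ L : ℕ, ∀ (g : G) (hg : g ∈ H),
      (d 1 ⟨g, hg⟩ : ℕ∞) ≤ (L : ℕ∞) * inducedDist X H d 1 g := by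
  classical
  set M : ℕ := Y.attach.sup (fun y => d 1 ⟨y.1, hYH y.1 y.2⟩) with hM
  refine ⟨M * D + 1, ?_⟩
  -- basic metric facts
  have dsub : ∀ a b : H, d 1 (a * b) ≤ d 1 a + d 1 b := by
    intro a b
    have h1 : d a (a * b) = d 1 b := by
      have := hd_inv a 1 b
      rwa [mul_one] at this
    calc d 1 (a * b) ≤ d 1 a + d a (a * b) := hd_tri _ _ _
      _ = d 1 a + d 1 b := by rw [h1]
  have dinv : ∀ a : H, d 1 a⁻¹ = d 1 a := by
    intro a
    have := hd_inv a a⁻¹ 1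
    rw [mul_inv_cancel, mul_one] at this
    rw [this]
    exact hd_symm _ _
  have dH_list : ∀ l : List H, d 1 l.prod ≤ (l.map (d 1)).sum := by
    intro l
    induction l with
    | nil => simp [hd_self]
    | cons a t ih =>
      simp only [List.prod_cons, List.map_cons, List.sum_cons]
      exact le_trans (dsub a t.prod) (Nat.add_le_add_left ih _)
  -- bound by Y-word length
  have dY : ∀ (p : G) (hp : p ∈ H), d 1 ⟨p, hp⟩ ≤ M * wordLength Y p := by
    intro p hp
    have hne : {n : ℕ | ∃ l : List G, (∀ x ∈ l, x ∈ Y) ∧ l.prod = p ∧ l.length = n}.Nonempty := by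
      obtain ⟨l, hl1, hl2⟩ := hYgen p hp
      exact ⟨l.length, l, hl1, hl2, rfl⟩
    obtain ⟨l, hl1, hl2, hl3⟩ := Nat.sInf_mem hne
    set lH : List H := l.pmap (fun y hy => (⟨y, hy⟩ : H)) (fun y hy => hYH y (hl1 y hy)) with hlH
    have hcoe : ((lH.prod : H) : G) = l.prod := by
      rw [SubmonoidClass.coe_list_prod, hlH, List.map_pmap]
      simp [List.pmap_eq_map]
    have hprodH : lH.prod = ⟨p, hp⟩ := by
      apply Subtype.ext
      rw [hcoe, hl2]
    have hlen : lH.length = l.length := by simp [hlH]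
    have hub : ∀ x ∈ lH.map (d 1), x ≤ M := by
      intro x hx
      rw [List.mem_map] at hx
      obtain ⟨a, ha, rfl⟩ := hx
      rw [hlH, List.mem_pmap] at ha
      obtain ⟨y, hy, rfl⟩ := ha
      exact Finset.le_sup (f := fun y => d 1 ⟨y.1, hYH y.1 y.2⟩)
        (Finset.mem_attach Y ⟨y, hl1 y hy⟩)
    calc d 1 ⟨p, hp⟩ = d 1 lH.prod := by rw [hprodH]
      _ ≤ (lH.map (d 1)).sum := dH_list lH
      _ ≤ (lH.map (d 1)).length • M := List.sum_le_card_nsmul _ _ hub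
      _ = lH.length * M := by simp [mul_comm]
      _ = M * wordLength Y p := by
          rw [hlen, hl3, mul_comm]
          rfl
  -- natural-valued weight
  set w : G → ℕ := fun x =>
    if x = 1 then 0 else if x ∈ X then 1 else if hx : x ∈ H then d 1 ⟨x, hx⟩ else 0 with hw
  -- key rearrangement lemma
  have key : ∀ l : List G, (∀ x ∈ l, x = 1 ∨ x ∈ X ∨ x ∈ H) →
      ∃ (h : H) (xs : List G), (∀ x ∈ xs, x ∈ X) ∧ (h : G) * xs.prod = l.prod ∧
        d 1 h + xs.length ≤ (l.map w).sum := by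
    intro l hl
    induction l with
    | nil => exact ⟨1, [], by simp, by simp, by simp [hd_self]⟩
    | cons a t ih =>
      obtain ⟨h, xs, hxs, hprod, hbound⟩ := ih (fun x hx => hl x (List.mem_cons_of_mem a hx))
      by_cases ha1 : a = 1
      · refine ⟨h, xs, hxs, by simp [ha1, hprod], ?_⟩
        have hwa : w a = 0 := by rw [hw]; simp [ha1]
        simpa [hwa] using hbound
      by_cases haX : a ∈ X
      · -- move a past h
        refine ⟨if ε a = 1 then h else h⁻¹, a :: xs, ?_, ?_, ?_⟩
        · intro x hx
          rcases List.mem_cons.mp hx with rfl | hx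
          · exact haX
          · exact hxs x hx
        · have hcm : a * (h : G) = (h : G) ^ (ε a) * a := hcomm a h (hHA h.2)
          have hcoe : ((if ε a = 1 then h else h⁻¹ : H) : G) = (h : G) ^ (ε a) := by
            rcases hε a with he | he <;> simp [he]
          rw [List.prod_cons, List.prod_cons, ← hprod, hcoe, ← mul_assoc, ← hcm, mul_assoc]
        · have hwa : w a = 1 := by rw [hw]; simp [ha1, haX]
          have hd' : d 1 (if ε a = 1 then h else h⁻¹) = d 1 h := by
            split <;> simp [dinv]
          rw [List.map_cons, List.sum_cons, hwa, hd', List.length_cons]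
          omega
      · have haH : a ∈ H := by
          rcases hl a List.mem_cons_self with h1 | h2 | h3
          · exact absurd h1 ha1
          · exact absurd h2 haX
          · exact h3
        refine ⟨⟨a, haH⟩ * h, xs, hxs, ?_, ?_⟩
        · rw [List.prod_cons, ← hprod]
          push_cast
          rw [mul_assoc]
        · have hwa : w a = d 1 ⟨a, haH⟩ := by rw [hw]; simp [ha1, haX, haH]
          have := dsub ⟨a, haH⟩ h
          rw [List.map_cons, List.sum_cons, hwa]
          omega
  intro g hg
  have hL0 : ((M * D + 1 : ℕ) : ℕ∞) ≠ 0 := by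
    simp
  -- main bound for each element of the defining set
  have hmain : ∀ n ∈ {n : ℕ∞ | ∃ l : List G,
      l.prod = (1 : G)⁻¹ * g ∧ (l.map (inducedWeight X H d)).sum = n},
      (d 1 ⟨g, hg⟩ : ℕ∞) ≤ ((M * D + 1 : ℕ) : ℕ∞) * n := by
    rintro n ⟨l, hlprod, rfl⟩
    rw [inv_one, one_mul] at hlprod
    by_cases hfin : ∀ x ∈ l, x = 1 ∨ x ∈ X ∨ x ∈ H
    · have hcast : ∀ x ∈ l, inducedWeight X H d x = (w x : ℕ∞) := by
        intro x hx
        rw [inducedWeight, hw]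
        split_ifs with h1 h2 h3
        · simp [h1]
        · simp [h1, h2]
        · simp [h1, h2, h3]
        · exact absurd (hfin x hx) (by simp [h1, h2, h3])
      have hsum : (l.map (inducedWeight X H d)).sum = ((l.map w).sum : ℕ∞) := by
        clear hlprod
        induction l with
        | nil => simp
        | cons a t ih =>
          simp only [List.map_cons, List.sum_cons, Nat.cast_add]
          rw [hcast a List.mem_cons_self,
            ih (fun x hx => hfin x (List.mem_cons_of_mem a hx))
               (fun x hx => hcast x (List.mem_cons_of_mem a hx))]
      obtain ⟨h, xs, hxs, hprod, hbound⟩ := key l hfin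
      rw [hlprod] at hprod
      have hp : xs.prod ∈ H := by
        have : xs.prod = (h : G)⁻¹ * g := by
          rw [← hprod, inv_mul_cancel_left]
        rw [this]
        exact H.mul_mem (H.inv_mem h.2) hg
      have hgsplit : (⟨g, hg⟩ : H) = h * ⟨xs.prod, hp⟩ := by
        apply Subtype.ext
        simpa using hprod.symm
      have hXlen : wordLength X xs.prod ≤ xs.length :=
        Nat.sInf_le ⟨xs, hxs, rfl, rfl⟩
      have hnat : d 1 ⟨g, hg⟩ ≤ (M * D + 1) * (l.map w).sum := by
        have h1 : d 1 ⟨g, hg⟩ ≤ d 1 h + d 1 ⟨xs.prod, hp⟩ := by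
          rw [hgsplit]; exact dsub _ _
        have h2 : d 1 ⟨xs.prod, hp⟩ ≤ M * (D * xs.length) := by
          calc d 1 ⟨xs.prod, hp⟩ ≤ M * wordLength Y xs.prod := dY _ hp
            _ ≤ M * (D * wordLength X xs.prod) :=
                Nat.mul_le_mul_left M (hD _ hp)
            _ ≤ M * (D * xs.length) :=
                Nat.mul_le_mul_left M (Nat.mul_le_mul_left D hXlen)
        calc d 1 ⟨g, hg⟩ ≤ d 1 h + M * D * xs.length := by
              rw [mul_assoc]; exact le_trans h1 (Nat.add_le_add_left h2 _)
          _ ≤ (d 1 h + xs.length) + M * D * (d 1 h + xs.length) := by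
              have hx : M * D * xs.length ≤ M * D * (d 1 h + xs.length) :=
                Nat.mul_le_mul_left _ (Nat.le_add_left _ _)
              omega
          _ = (M * D + 1) * (d 1 h + xs.length) := by ring
          _ ≤ (M * D + 1) * (l.map w).sum := Nat.mul_le_mul_left _ hbound
      calc (d 1 ⟨g, hg⟩ : ℕ∞) ≤ (((M * D + 1) * (l.map w).sum : ℕ) : ℕ∞) :=
            Nat.cast_le.mpr hnat
        _ = ((M * D + 1 : ℕ) : ℕ∞) * ((l.map w).sum : ℕ∞) := by push_cast; ring
        _ = ((M * D + 1 : ℕ) : ℕ∞) * (l.map (inducedWeight X H d)).sum := by rw [hsum]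
    · push_neg at hfin
      obtain ⟨x, hxl, hx1, hxX, hxH⟩ := hfin
      have hwx : inducedWeight X H d x = ⊤ := by
        rw [inducedWeight]
        simp [hx1, hxX, hxH]
      have top_sum : ∀ L' : List ℕ∞, ⊤ ∈ L' → L'.sum = ⊤ := by
        intro L' hmem
        induction L' with
        | nil => simp at hmem
        | cons a t ih =>
          rw [List.sum_cons]
          rcases List.mem_cons.mp hmem with h' | h'
          · rw [← h', top_add]
          · rw [ih h', add_top]
      have htop : (l.map (inducedWeight X H d)).sum = ⊤ :=
        top_sum _ (List.mem_map.mpr ⟨x, hxl, hwx⟩)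
      rw [htop, ENat.mul_top hL0]
      exact le_top
  -- conclude via the infimum
  rw [inducedDist]
  set S := {n : ℕ∞ | ∃ l : List G,
      l.prod = (1 : G)⁻¹ * g ∧ (l.map (inducedWeight X H d)).sum = n} with hS
  by_cases htop : sInf S = ⊤
  · rw [htop, ENat.mul_top hL0]
    exact le_top
  · obtain ⟨m, hm⟩ := WithTop.ne_top_iff_exists.mp htop
    have hlt : sInf S < ((m + 1 : ℕ) : ℕ∞) := by
      rw [← hm]
      exact ENat.coe_lt_coe.mpr (Nat.lt_succ_self m)
    obtain ⟨n, hnS, hn⟩ := sInf_lt_iff.mp hlt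
    have hnle : n ≤ sInf S := by
      rw [← hm]
      have hnt : n ≠ ⊤ := ne_top_of_lt hn
      obtain ⟨k, rfl⟩ := WithTop.ne_top_iff_exists.mp hnt
      exact ENat.coe_le_coe.mpr (Nat.lt_succ_iff.mp (ENat.coe_lt_coe.mp hn))
    exact le_trans (hmain n hnS) (mul_le_mul_right hnle _)
end
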